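/- arXiv:2211.00346 — 4 statements merged into one kernel-verified Lean document; each statement's English description precedes it below -/
import Mathlib

section
/- Let X = (X_t) be a random field indexed by t ∈ [0,∞)^N with values in ℝ^d on a probability space, such that X_0 = 0 almost surely, for every pair s ≼ t the increment X_t − X_s is independent of X_s, and X_{t+τ} − X_t has the same law as X_τ for all t, τ ∈ [0,∞)^N. Let μ_t denote the law of X_t and let e_1,…,e_N be the canonical basis of ℝ^N. Then for every t = (t_1,…,t_N) ∈ [0,∞)^N one has μ_t = μ_{t_1 e_1} ∗ μ_{t_2 e_2} ∗ ⋯ ∗ μ_{t_N e_N}; equivalently, there exist mutually independent random vectors Y^{(1)},…,Y^{(N)} with Y^{(j)} distributed as X_{t_j e_j} such that Y^{(1)} + ⋯ + Y^{(N)} has the same law as X_t. (Part (ii) of Proposition 2.6.) -/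
/-!
Let `t⁽ᵏ⁾ = (0, …, 0, t_k, …, t_N)`. Since `t⁽ᵏ⁾ = t⁽ᵏ⁺¹⁾ + t_k e_k`, writing
`X_{t⁽ᵏ⁾} = (X_{t⁽ᵏ⁾} - X_{t⁽ᵏ⁺¹⁾}) + X_{t⁽ᵏ⁺¹⁾}` as a sum of independent terms, the first of law
`μ_{t_k e_k}` by stationarity, gives `μ_{t⁽ᵏ⁾} = μ_{t_k e_k} ∗ μ_{t⁽ᵏ⁺¹⁾}`; telescoping from
`t⁽¹⁾ = t` down to `t⁽ᴺ⁺¹⁾ = 0` yields the convolution formula. Independent `Y⁽ʲ⁾` with the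
prescribed laws exist on a product space, and the law of their sum is the same iterated convolution.
-/

open MeasureTheory ProbabilityTheory
open scoped MeasureTheory

namespace MeasureTheory.Measure

variable {E : Type*} [MeasurableSpace E] [AddMonoid E]

theorem foldr_conv_ofFn_eq_of_telescope :
    ∀ {n : ℕ} (m : Fin n → Measure E) (f : ℕ → Measure E), f n = dirac 0 →
      (∀ k : Fin n, f k = m k ∗ f (k + 1)) → f 0 = (List.ofFn m).foldr (· ∗ ·) (dirac 0)
  | 0, _, _, hn, _ => hn
  | n + 1, m, f, hn, hstep => by
    rw [List.ofFn_succ, List.foldr_cons]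
    refine (hstep 0).trans (congrArg (m 0 ∗ ·) ?_)
    exact foldr_conv_ofFn_eq_of_telescope (fun k => m k.succ) (fun k => f (k + 1)) hn
      fun k => hstep k.succ

end MeasureTheory.Measure

namespace ProbabilityTheory

variable {Ω E : Type*} [MeasurableSpace Ω] {P : Measure Ω} [IsProbabilityMeasure P]
  [MeasurableSpace E]

theorem IndepFun.map_eq_map_sub_conv_map [AddGroup E] [MeasurableAdd₂ E] [MeasurableSub₂ E]
    {f g : Ω → E} (hf : Measurable f) (hg : Measurable g) (h : IndepFun (f - g) g P) :
    P.map f = P.map (f - g) ∗ P.map g := by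
  simpa using h.map_add_eq_map_conv_map (hf.sub hg) hg

theorem iIndepFun.map_sum_eq_foldr_conv [AddCommMonoid E] [MeasurableAdd₂ E] :
    ∀ {n : ℕ} {Y : Fin n → Ω → E}, iIndepFun Y P → (∀ j, Measurable (Y j)) →
      P.map (fun ω => ∑ j, Y j ω) =
        (List.ofFn fun j => P.map (Y j)).foldr (· ∗ ·) (Measure.dirac 0)
  | 0, _, _, _ => by simp
  | n + 1, Y, hY, hmeas => by
    have hrest : P.map (fun ω => ∑ j : Fin n, Y j.succ ω) = _ :=
      (hY.precomp (Fin.succ_injective n)).map_sum_eq_foldr_conv fun j => hmeas j.succ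
    have hindep : IndepFun (Y 0) (∑ j ∈ Finset.univ.map (Fin.succEmb n), Y j) P :=
      (hY.indepFun_finsetSum_of_notMem hmeas (by simp)).symm
    have hsum : (fun ω => ∑ j, Y j ω) = Y 0 + ∑ j ∈ Finset.univ.map (Fin.succEmb n), Y j := by
      ext ω; simp [Fin.sum_univ_succ]
    rw [hsum, hindep.map_add_eq_map_conv_map (hmeas 0) (by fun_prop),
      List.ofFn_succ, List.foldr_cons, ← hrest]
    congr 2
    ext ω; simp

theorem map_add_eq_conv_of_indep_stationary {ι : Type*} [AddCommGroup E] [MeasurableAdd₂ E]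
    [MeasurableSub₂ E] (X : (ι → ℝ) → Ω → E) (hXmeas : ∀ t, Measurable (X t))
    (hindep : ∀ s t : ι → ℝ, (∀ j, 0 ≤ s j) → (∀ j, s j ≤ t j) →
      IndepFun (fun ω => X t ω - X s ω) (X s) P)
    (hstat : ∀ t τ : ι → ℝ, (∀ j, 0 ≤ t j) → (∀ j, 0 ≤ τ j) →
      Measure.map (fun ω => X (t + τ) ω - X t ω) P = Measure.map (X τ) P)
    {s τ : ι → ℝ} (hs : ∀ j, 0 ≤ s j) (hτ : ∀ j, 0 ≤ τ j) :
    P.map (X (s + τ)) = P.map (X τ) ∗ P.map (X s) := by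
  have hincr := hindep s (s + τ) hs fun j => le_add_of_nonneg_right (hτ j)
  rw [(hincr : IndepFun (X (s + τ) - X s) (X s) P).map_eq_map_sub_conv_map (hXmeas _) (hXmeas _),
    ← hstat s τ hs hτ]
  rfl

end ProbabilityTheory

def zeroBelow {N : ℕ} (t : Fin N → ℝ) (k : ℕ) : Fin N → ℝ :=
  fun j => if k ≤ (j : ℕ) then t j else 0

section zeroBelow

variable {N : ℕ} (t : Fin N → ℝ)

@[simp] theorem zeroBelow_zero : zeroBelow t 0 = t := by
  funext j; simp [zeroBelow]

theorem zeroBelow_self : zeroBelow t N = 0 := by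
  funext j; simp [zeroBelow, j.isLt]

theorem zeroBelow_nonneg (ht : ∀ j, 0 ≤ t j) (k : ℕ) (j : Fin N) : 0 ≤ zeroBelow t k j := by
  unfold zeroBelow; split_ifs <;> simp [ht j]

theorem zeroBelow_eq_add_single (k : Fin N) :
    zeroBelow t k = zeroBelow t (k + 1) + Pi.single k (t k) := by
  funext j
  by_cases hjk : j = k
  · subst hjk; simp [zeroBelow]
  · have hle : (k : ℕ) ≤ j ↔ (k : ℕ) + 1 ≤ j := by
      have := Fin.val_ne_of_ne hjk; omega
    simp only [zeroBelow, Pi.add_apply, Pi.single_eq_of_ne hjk, add_zero, hle]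

end zeroBelow

/-- Proposition 2.6 (ii): for a multiparameter Lévy process,
`μ_t = μ_{t₁e₁} ∗ ⋯ ∗ μ_{t_N e_N}`; equivalently there exist mutually independent
random vectors `Y⁽ʲ⁾ ~ X_{t_j e_j}` whose sum is distributed as `X_t`. -/
theorem stmt_1
    {Ω : Type*} [MeasurableSpace Ω] (P : Measure Ω) [IsProbabilityMeasure P]
    {N d : ℕ}
    (X : (Fin N → ℝ) → Ω → EuclideanSpace ℝ (Fin d))
    (hXmeas : ∀ t, Measurable (X t))
    (hX0 : ∀ᵐ ω ∂P, X 0 ω = 0)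
    (hindep : ∀ s t : Fin N → ℝ, (∀ j, 0 ≤ s j) → (∀ j, s j ≤ t j) →
      IndepFun (fun ω => X t ω - X s ω) (X s) P)
    (hstat : ∀ t τ : Fin N → ℝ, (∀ j, 0 ≤ t j) → (∀ j, 0 ≤ τ j) →
      Measure.map (fun ω => X (t + τ) ω - X t ω) P = Measure.map (X τ) P) :
    ∀ t : Fin N → ℝ, (∀ j, 0 ≤ t j) →
      (Measure.map (X t) P =
        (List.ofFn (fun j : Fin N => Measure.map (X (Pi.single j (t j))) P)).foldr
          (fun m acc => MeasureTheory.Measure.conv m acc) (Measure.dirac (0 : EuclideanSpace ℝ (Fin d)))) ∧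
      ∃ (Ω' : Type) (_ : MeasurableSpace Ω') (P' : Measure Ω'),
        IsProbabilityMeasure P' ∧
        ∃ Y : Fin N → Ω' → EuclideanSpace ℝ (Fin d),
          iIndepFun Y P' ∧
          (∀ j, Measure.map (Y j) P' = Measure.map (X (Pi.single j (t j))) P) ∧
          Measure.map (fun ω => ∑ j, Y j ω) P' = Measure.map (X t) P := by
  intro t ht
  set m := fun j : Fin N => P.map (X (Pi.single j (t j)))
  have hlaw : P.map (X t) = (List.ofFn m).foldr (· ∗ ·) (Measure.dirac 0) := by
    have hfin : P.map (X (zeroBelow t N)) = Measure.dirac 0 := by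
      rw [zeroBelow_self, Measure.map_congr hX0, Measure.map_const, measure_univ, one_smul]
    have hstep (k : Fin N) :
        P.map (X (zeroBelow t k)) = m k ∗ P.map (X (zeroBelow t (k + 1))) := by
      rw [zeroBelow_eq_add_single]
      exact map_add_eq_conv_of_indep_stationary X hXmeas hindep hstat
        (zeroBelow_nonneg t ht _) fun j => by by_cases h : j = k <;> simp [h, ht k]
    simpa using
      Measure.foldr_conv_ofFn_eq_of_telescope m (fun k => P.map (X (zeroBelow t k))) hfin hstep
  refine ⟨hlaw, ?_⟩
  have hm (j : Fin N) : IsProbabilityMeasure (m j) :=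
    Measure.isProbabilityMeasure_map (hXmeas _).aemeasurable
  obtain ⟨Ω', _, P', Y, hYmeas, hYlaw, hYindep, hP'⟩ := exists_hasLaw_indepFun _ m
  refine ⟨Ω', _, P', hP', Y, hYindep, fun j => (hYlaw j).map_eq, ?_⟩
  rw [hYindep.map_sum_eq_foldr_conv hYmeas, hlaw]
  simp only [(hYlaw _).map_eq]
end

section
/- Let X = (X_t) be a random field indexed by t ∈ [0,∞)^N with values in ℝ^d on a probability space, such that X_0 = 0 almost surely, for every pair s ≼ t the increment X_t − X_s is independent of X_s, and X_{t+τ} − X_t has the same law as X_τ for all t, τ ∈ [0,∞)^N. Let e_1,…,e_N be the canonical basis of ℝ^N. Then for every t = (t_1,…,t_N) ∈ [0,∞)^N and every ξ ∈ ℝ^d, the characteristic function factorizes: E[exp(i⟨ξ, X_t⟩)] = ∏_{j=1}^N E[exp(i⟨ξ, X_{t_j e_j}⟩)]. (Proposition 2.8 on the characteristic function of a multiparameter Lévy process.) -/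
open MeasureTheory ProbabilityTheory
open scoped RealInnerProductSpace

/-! A function that is multiplicative on the positive cone turns sums of positive elements into
products, and by independence and stationarity of the increments `s ↦ E[exp(i⟨ξ, X_s⟩)]` is
such a function; writing `t = ∑ⱼ tⱼ eⱼ` gives the factorization. -/

lemma map_sum_of_map_add_of_nonneg {ι M N : Type*} [AddCommMonoid M] [PartialOrder M]
    [IsOrderedAddMonoid M] [CommMonoid N] (F : M → N) (hF0 : F 0 = 1)
    (hFadd : ∀ a b, 0 ≤ a → 0 ≤ b → F (a + b) = F a * F b)
    (s : Finset ι) (v : ι → M) (hv : ∀ i ∈ s, 0 ≤ v i) :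
    F (∑ i ∈ s, v i) = ∏ i ∈ s, F (v i) := by
  classical
  induction s using Finset.induction_on with
  | empty => simpa using hF0
  | insert j s hjs ih =>
    rw [Finset.sum_insert hjs, Finset.prod_insert hjs,
      hFadd _ _ (hv j (Finset.mem_insert_self j s))
        (Finset.sum_nonneg fun i hi => hv i (Finset.mem_insert_of_mem hi)),
      ih fun i hi => hv i (Finset.mem_insert_of_mem hi)]

section CharFun

variable {Ω E : Type*} [MeasurableSpace Ω] {P : Measure Ω}
  [NormedAddCommGroup E] [InnerProductSpace ℝ E] [MeasurableSpace E] [BorelSpace E]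

lemma charFun_map_eq_integral_exp {Y : Ω → E} (hY : Measurable Y) (ξ : E) :
    charFun (P.map Y) ξ = ∫ ω, Complex.exp (Complex.I * (⟪ξ, Y ω⟫ : ℂ)) ∂P := by
  rw [charFun_apply, integral_map hY.aemeasurable (by fun_prop)]
  simp_rw [real_inner_comm ξ, mul_comm Complex.I]

lemma charFun_map_of_ae_eq_zero [IsProbabilityMeasure P] {Y : Ω → E}
    (hY : ∀ᵐ ω ∂P, Y ω = 0) :
    charFun (P.map Y) = 1 := by
  ext ξ
  rw [Measure.map_congr hY, Measure.map_const, measure_univ, one_smul, charFun_dirac]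
  simp

lemma charFun_map_eq_mul_of_indepFun_sub [IsProbabilityMeasure P] [SecondCountableTopology E]
    {Y Z W : Ω → E} (hY : Measurable Y) (hZ : Measurable Z)
    (hind : IndepFun (Z - Y) Y P) (hlaw : P.map (Z - Y) = P.map W) :
    charFun (P.map Z) = charFun (P.map Y) * charFun (P.map W) := by
  have hsplit : Z = (Z - Y) + Y := (sub_add_cancel Z Y).symm
  rw [hsplit, hind.charFun_map_add_eq_mul (hZ.sub hY).aemeasurable hY.aemeasurable, hlaw, mul_comm]

end CharFun

/-- Proposition 2.8: the characteristic function of a multiparameter Lévy process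
factorizes as `E[exp(i⟨ξ, X_t⟩)] = ∏_j E[exp(i⟨ξ, X_{t_j e_j}⟩)]`. -/
theorem stmt_2
    {Ω : Type*} [MeasurableSpace Ω] (P : Measure Ω) [IsProbabilityMeasure P]
    {N d : ℕ}
    (X : (Fin N → ℝ) → Ω → EuclideanSpace ℝ (Fin d))
    (hXmeas : ∀ t, Measurable (X t))
    (hX0 : ∀ᵐ ω ∂P, X 0 ω = 0)
    (hindep : ∀ s t : Fin N → ℝ, (∀ j, 0 ≤ s j) → (∀ j, s j ≤ t j) →
      IndepFun (fun ω => X t ω - X s ω) (X s) P)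
    (hstat : ∀ t τ : Fin N → ℝ, (∀ j, 0 ≤ t j) → (∀ j, 0 ≤ τ j) →
      Measure.map (fun ω => X (t + τ) ω - X t ω) P = Measure.map (X τ) P) :
    ∀ t : Fin N → ℝ, (∀ j, 0 ≤ t j) → ∀ ξ : EuclideanSpace ℝ (Fin d),
      (∫ ω, Complex.exp (Complex.I * (⟪ξ, X t ω⟫ : ℂ)) ∂P) =
        ∏ j, ∫ ω, Complex.exp (Complex.I * (⟪ξ, X (Pi.single j (t j)) ω⟫ : ℂ)) ∂P := by
  intro t ht ξ
  have hmul : ∀ s τ : Fin N → ℝ, 0 ≤ s → 0 ≤ τ →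
      charFun (P.map (X (s + τ))) ξ = charFun (P.map (X s)) ξ * charFun (P.map (X τ)) ξ :=
    fun s τ hs hτ => congrFun (charFun_map_eq_mul_of_indepFun_sub (hXmeas s) (hXmeas _)
      (hindep s _ hs fun j => le_add_of_nonneg_right (hτ j)) (hstat s τ hs hτ)) ξ
  have hsingle : ∀ j, 0 ≤ (Pi.single j (t j) : Fin N → ℝ) :=
    fun j => Pi.single_nonneg.mpr (ht j)
  simp_rw [← charFun_map_eq_integral_exp (hXmeas _)]
  conv_lhs => rw [← Finset.univ_sum_single t]
  exact map_sum_of_map_add_of_nonneg (fun s => charFun (P.map (X s)) ξ)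
    (congrFun (charFun_map_of_ae_eq_zero hX0) ξ) hmul _ _ fun j _ => hsingle j
end

section
/- Let X = (X_t) be a random field indexed by t ∈ [0,∞)^N with values in ℝ on a probability space, with X_0 = 0 almost surely, such that for every finite chain 0 = t⁰ ≼ t¹ ≼ ⋯ ≼ t^k in [0,∞)^N the increments X_{t^j} − X_{t^{j−1}} (j = 1,…,k) are mutually independent, and X_{t+τ} − X_t has the same law as X_τ for all t, τ. Assume each X_{t_j e_j} is square-integrable with E[X_{t_j e_j}] = t_j μ_j and Var(X_{t_j e_j}) = t_j σ_j² for all t_j ≥ 0 and reals μ_j, σ_j² ≥ 0. Then for all s ≼ t in [0,∞)^N: Cov(X_s, X_t) = Σ_{j=1}^N s_j σ_j², and consequently, whenever Σ_j s_j σ_j² > 0 and Σ_j t_j σ_j² > 0, the correlation coefficient equals ρ(X_s, X_t) = sqrt((Σ_j s_j σ_j²)/(Σ_j t_j σ_j²)). (Proposition 2.10: autocorrelation function of a multiparameter Lévy process.) -/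
/-!
Walk from `0` to `u ≽ 0` along the staircase that raises one coordinate at a time. Its increments
are independent, and by stationarity the `j`-th one has the law of `X (u_j e_j)`, so
`Var X_u = ∑_j u_j σ_j²`. For `s ≼ t` the increment `X_t - X_s` is independent of `X_s` (chain
`0 ≼ s ≼ t`), hence `Cov(X_s, X_t) = Var X_s`; the correlation formula is then algebra.
-/

open MeasureTheory ProbabilityTheory

/-- The covariance `Cov(U,V) = E[UV] − E[U]E[V]`. -/
noncomputable def covP {Ω : Type*} [MeasurableSpace Ω] (P : Measure Ω)
    (U V : Ω → ℝ) : ℝ :=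
  (∫ ω, U ω * V ω ∂P) - (∫ ω, U ω ∂P) * (∫ ω, V ω ∂P)

section Covariance

variable {Ω : Type*} [MeasurableSpace Ω] {P : Measure Ω} {U V : Ω → ℝ}

lemma covP_eq_covariance [IsProbabilityMeasure P] (hU : MemLp U 2 P) (hV : MemLp V 2 P) :
    covP P U V = cov[U, V; P] := by
  rw [covariance_eq_sub hU hV]
  rfl

lemma covariance_eq_variance_of_indepFun_sub [IsFiniteMeasure P] (hU : MemLp U 2 P)
    (hV : MemLp V 2 P) (h : IndepFun U (V - U) P) : cov[U, V; P] = Var[U; P] := by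
  conv_lhs => rw [← add_sub_cancel U V]
  rw [covariance_add_right hU hU (hV.sub hU), covariance_self hU.aemeasurable,
    h.covariance_eq_zero hU (hV.sub hU), add_zero]

end Covariance

lemma div_sqrt_mul_sqrt_eq_sqrt_div {a : ℝ} (ha : 0 ≤ a) (b : ℝ) :
    a / (√a * √b) = √(a / b) := by
  rw [Real.sqrt_div ha, ← div_div, Real.div_sqrt]

section Staircase

variable {N : ℕ} {u : Fin N → ℝ}

def stair (u : Fin N → ℝ) (i : ℕ) : Fin N → ℝ := fun j => if (j : ℕ) < i then u j else 0

@[simp] lemma stair_zero (u : Fin N → ℝ) : stair u 0 = 0 := by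
  funext j
  simp [stair]

@[simp] lemma stair_self (u : Fin N → ℝ) : stair u N = u := by
  funext j
  simp [stair, j.isLt]

lemma stair_succ (u : Fin N → ℝ) (i : Fin N) :
    stair u (i + 1) = stair u i + Pi.single i (u i) := by
  funext j
  rcases lt_trichotomy (j : ℕ) i with hlt | heq | hgt
  · simp [stair, hlt, hlt.trans (Nat.lt_succ_self _), Fin.ne_of_lt hlt]
  · simp [stair, Fin.ext heq]
  · simp [stair, hgt.not_gt, Nat.not_lt.2 hgt, (Fin.ne_of_lt hgt).symm]

lemma stair_nonneg (hu : ∀ j, 0 ≤ u j) (i : ℕ) (j : Fin N) : 0 ≤ stair u i j := by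
  unfold stair
  split_ifs
  exacts [hu j, le_rfl]

lemma stair_mono (hu : ∀ j, 0 ≤ u j) {i i' : ℕ} (h : i ≤ i') (j : Fin N) :
    stair u i j ≤ stair u i' j := by
  unfold stair
  split_ifs with h₁ h₂
  · exact le_rfl
  · omega
  · exact hu j
  · exact le_rfl

end Staircase

section LevyField

variable {Ω : Type*} [MeasurableSpace Ω] {N : ℕ}

def HasIndepIncrementsAlongChains (X : (Fin N → ℝ) → Ω → ℝ) (P : Measure Ω) : Prop :=
  ∀ (k : ℕ) (c : Fin (k + 1) → Fin N → ℝ), c 0 = 0 →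
    (∀ i j, 0 ≤ c i j) → (∀ (i : Fin k) (j : Fin N), c i.castSucc j ≤ c i.succ j) →
    iIndepFun (fun i : Fin k => fun ω => X (c i.succ) ω - X (c i.castSucc) ω) P

def HasStationaryIncrements (X : (Fin N → ℝ) → Ω → ℝ) (P : Measure Ω) : Prop :=
  ∀ t τ : Fin N → ℝ, (∀ j, 0 ≤ t j) → (∀ j, 0 ≤ τ j) →
    Measure.map (fun ω => X (t + τ) ω - X t ω) P = Measure.map (X τ) P

def stairIncrement (X : (Fin N → ℝ) → Ω → ℝ) (u : Fin N → ℝ) (i : ℕ) : Ω → ℝ :=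
  fun ω => X (stair u (i + 1)) ω - X (stair u i) ω

variable {P : Measure Ω} {X : (Fin N → ℝ) → Ω → ℝ} {u : Fin N → ℝ}

lemma identDistrib_stairIncrement (hX : ∀ t, Measurable (X t))
    (hstat : HasStationaryIncrements X P) (hu : ∀ j, 0 ≤ u j) (i : Fin N) :
    IdentDistrib (stairIncrement X u i) (X (Pi.single i (u i))) P P := by
  refine ⟨((hX _).sub (hX _)).aemeasurable, (hX _).aemeasurable, ?_⟩
  have h := hstat (stair u i) (Pi.single i (u i)) (stair_nonneg hu i)
    (Pi.single_nonneg.2 (hu i) : (0 : Fin N → ℝ) ≤ Pi.single i (u i))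
  rwa [← stair_succ] at h

lemma iIndepFun_stairIncrement (hind : HasIndepIncrementsAlongChains X P)
    (hu : ∀ j, 0 ≤ u j) : iIndepFun (fun i : Fin N => stairIncrement X u i) P :=
  hind N (fun i => stair u i) (stair_zero u) (fun i => stair_nonneg hu i)
    (fun i => stair_mono hu (Nat.le_succ i))

lemma sum_stairIncrement_ae_eq (hX0 : ∀ᵐ ω ∂P, X 0 ω = 0) :
    ∑ i : Fin N, stairIncrement X u i =ᵐ[P] X u := by
  filter_upwards [hX0] with ω h0
  rw [Finset.sum_apply, Fin.sum_univ_eq_sum_range (fun i => stairIncrement X u i ω)]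
  unfold stairIncrement
  rw [Finset.sum_range_sub (fun i => X (stair u i) ω), stair_self, stair_zero, h0, sub_zero]

lemma memLp_two_of_nonneg (hX : ∀ t, Measurable (X t)) (hstat : HasStationaryIncrements X P)
    (hX0 : ∀ᵐ ω ∂P, X 0 ω = 0)
    (hL2 : ∀ (j : Fin N) (r : ℝ), 0 ≤ r → MemLp (X (Pi.single j r)) 2 P)
    (hu : ∀ j, 0 ≤ u j) : MemLp (X u) 2 P :=
  (memLp_finsetSum' _ fun i _ =>
    (identDistrib_stairIncrement hX hstat hu i).memLp_iff.2 (hL2 i (u i) (hu i))).ae_eq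
    (sum_stairIncrement_ae_eq hX0)

lemma variance_eq_sum_of_nonneg (hX : ∀ t, Measurable (X t))
    (hstat : HasStationaryIncrements X P) (hind : HasIndepIncrementsAlongChains X P)
    (hX0 : ∀ᵐ ω ∂P, X 0 ω = 0)
    (hL2 : ∀ (j : Fin N) (r : ℝ), 0 ≤ r → MemLp (X (Pi.single j r)) 2 P)
    {σ2 : Fin N → ℝ}
    (hvar : ∀ (j : Fin N) (r : ℝ), 0 ≤ r → variance (X (Pi.single j r)) P = r * σ2 j)
    (hu : ∀ j, 0 ≤ u j) : variance (X u) P = ∑ j, u j * σ2 j := by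
  have hid := identDistrib_stairIncrement hX hstat hu
  rw [← variance_congr (sum_stairIncrement_ae_eq hX0),
    IndepFun.variance_sum (fun i _ => (hid i).memLp_iff.2 (hL2 i (u i) (hu i)))
      (fun i _ j _ hij => (iIndepFun_stairIncrement hind hu).indepFun hij)]
  exact Finset.sum_congr rfl fun i _ => (hid i).variance_eq.trans (hvar i (u i) (hu i))

lemma indepFun_sub_of_le (hind : HasIndepIncrementsAlongChains X P)
    (hX0 : ∀ᵐ ω ∂P, X 0 ω = 0) {s t : Fin N → ℝ} (hs : ∀ j, 0 ≤ s j)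
    (hst : ∀ j, s j ≤ t j) : IndepFun (X s) (X t - X s) P := by
  have hchain := hind 2 ![0, s, t] rfl
    (fun i j => by fin_cases i <;> simp [hs j, (hs j).trans (hst j)])
    (fun i j => by fin_cases i <;> simp [hs j, hst j])
  refine (hchain.indepFun (show (0 : Fin 2) ≠ 1 by decide)).congr ?_ (.of_forall fun _ => rfl)
  filter_upwards [hX0] with ω h0
  simp [h0]

end LevyField

theorem stmt_4_general
    {Ω : Type*} [MeasurableSpace Ω] (P : Measure Ω) [IsProbabilityMeasure P]
    {N : ℕ}
    (X : (Fin N → ℝ) → Ω → ℝ)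
    (hXmeas : ∀ t, Measurable (X t))
    (hX0 : ∀ᵐ ω ∂P, X 0 ω = 0)
    (hchain : ∀ (k : ℕ) (c : Fin (k + 1) → Fin N → ℝ), c 0 = 0 →
      (∀ i j, 0 ≤ c i j) → (∀ (i : Fin k) (j : Fin N), c i.castSucc j ≤ c i.succ j) →
      iIndepFun
        (fun i : Fin k => fun ω => X (c i.succ) ω - X (c i.castSucc) ω) P)
    (hstat : ∀ t τ : Fin N → ℝ, (∀ j, 0 ≤ t j) → (∀ j, 0 ≤ τ j) →
      Measure.map (fun ω => X (t + τ) ω - X t ω) P = Measure.map (X τ) P)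
    (σ2 : Fin N → ℝ)
    (hL2 : ∀ (j : Fin N) (r : ℝ), 0 ≤ r → MemLp (X (Pi.single j r)) 2 P)
    (hvar : ∀ (j : Fin N) (r : ℝ), 0 ≤ r → variance (X (Pi.single j r)) P = r * σ2 j) :
    ∀ s t : Fin N → ℝ, (∀ j, 0 ≤ s j) → (∀ j, s j ≤ t j) →
      covP P (X s) (X t) = ∑ j, s j * σ2 j ∧
      (0 < ∑ j, s j * σ2 j → 0 < ∑ j, t j * σ2 j →
        covP P (X s) (X t) /
            (Real.sqrt (variance (X s) P) * Real.sqrt (variance (X t) P)) =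
          Real.sqrt ((∑ j, s j * σ2 j) / (∑ j, t j * σ2 j))) := by
  intro s t hs hst
  have ht : ∀ j, 0 ≤ t j := fun j => (hs j).trans (hst j)
  have hL2' : ∀ {u}, (∀ j, 0 ≤ u j) → MemLp (X u) 2 P :=
    memLp_two_of_nonneg hXmeas hstat hX0 hL2
  have hvar' : ∀ {u}, (∀ j, 0 ≤ u j) → variance (X u) P = ∑ j, u j * σ2 j :=
    variance_eq_sum_of_nonneg hXmeas hstat hchain hX0 hL2 hvar
  have hcov : covP P (X s) (X t) = ∑ j, s j * σ2 j := by
    rw [covP_eq_covariance (hL2' hs) (hL2' ht),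
      covariance_eq_variance_of_indepFun_sub (hL2' hs) (hL2' ht)
        (indepFun_sub_of_le hchain hX0 hs hst), hvar' hs]
  refine ⟨hcov, fun hpos _ => ?_⟩
  rw [hcov, hvar' hs, hvar' ht]
  exact div_sqrt_mul_sqrt_eq_sqrt_div hpos.le _

/-- Proposition 2.10: for a real-valued multiparameter Lévy process and `s ≼ t`,
`Cov(X_s, X_t) = ∑_j s_j σ_j²`, and hence
`ρ(X_s, X_t) = sqrt((∑_j s_j σ_j²)/(∑_j t_j σ_j²))`. -/
theorem stmt_4
    {Ω : Type*} [MeasurableSpace Ω] (P : Measure Ω) [IsProbabilityMeasure P]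
    {N : ℕ}
    (X : (Fin N → ℝ) → Ω → ℝ)
    (hXmeas : ∀ t, Measurable (X t))
    (hX0 : ∀ᵐ ω ∂P, X 0 ω = 0)
    (hchain : ∀ (k : ℕ) (c : Fin (k + 1) → Fin N → ℝ), c 0 = 0 →
      (∀ i j, 0 ≤ c i j) → (∀ (i : Fin k) (j : Fin N), c i.castSucc j ≤ c i.succ j) →
      iIndepFun
        (fun i : Fin k => fun ω => X (c i.succ) ω - X (c i.castSucc) ω) P)
    (hstat : ∀ t τ : Fin N → ℝ, (∀ j, 0 ≤ t j) → (∀ j, 0 ≤ τ j) →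
      Measure.map (fun ω => X (t + τ) ω - X t ω) P = Measure.map (X τ) P)
    (μ σ2 : Fin N → ℝ) (hσ2 : ∀ j, 0 ≤ σ2 j)
    (hL2 : ∀ (j : Fin N) (r : ℝ), 0 ≤ r → MemLp (X (Pi.single j r)) 2 P)
    (hmean : ∀ (j : Fin N) (r : ℝ), 0 ≤ r → ∫ ω, X (Pi.single j r) ω ∂P = r * μ j)
    (hvar : ∀ (j : Fin N) (r : ℝ), 0 ≤ r → variance (X (Pi.single j r)) P = r * σ2 j) :
    ∀ s t : Fin N → ℝ, (∀ j, 0 ≤ s j) → (∀ j, s j ≤ t j) →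
      covP P (X s) (X t) = ∑ j, s j * σ2 j ∧
      (0 < ∑ j, s j * σ2 j → 0 < ∑ j, t j * σ2 j →
        covP P (X s) (X t) /
            (Real.sqrt (variance (X s) P) * Real.sqrt (variance (X t) P)) =
          Real.sqrt ((∑ j, s j * σ2 j) / (∑ j, t j * σ2 j))) :=
  stmt_4_general P X hXmeas hX0 hchain hstat σ2 hL2 hvar
end

section
/- Let ψ : ℝ^d → ℂ be measurable with Re ψ(ξ) ≤ 0 for all ξ and |ψ(ξ)| ≤ C(1 + |ξ|²) for some constant C > 0. Then for every Schwartz function h : ℝ^d → ℂ and every x ∈ ℝ^d, lim_{s → 0⁺} (1/s) · (2π)^{−d/2} ∫_{ℝ^d} e^{i⟨ξ,x⟩} (e^{s ψ(ξ)} − 1) ĥ(ξ) dξ = (2π)^{−d/2} ∫_{ℝ^d} e^{i⟨ξ,x⟩} ψ(ξ) ĥ(ξ) dξ. In particular, if for each s > 0 the function e^{sψ} is the characteristic function of a probability measure μ_s on ℝ^d and T_s h(x) = ∫ h(x+y) μ_s(dy), then the generator limit lim_{s→0⁺}(T_s h(x) − h(x))/s exists and equals the pseudo-differential operator with symbol ψ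 applied to h at x. (Theorem 2.16, part 2: the generator of the Feller semigroup of a multiparameter Lévy process is a pseudo-differential operator with symbol given by the Lévy exponent.) -/
/-
Write `ĥ` for `fourierT h`, which is again a Schwartz function, and `c = (2π)^{-d/2}`.
Fourier inversion gives `h (x + y) = c ∫ e^{i⟨ξ, x + y⟩} ĥ(ξ) dξ`, so integrating in `y`
against `μ_s` and swapping the integrals turns `T_s h x - h x` into
`c ∫ e^{i⟨ξ, x⟩} (e^{s ψ(ξ)} - 1) ĥ(ξ) dξ`. Since `Re ψ ≤ 0`, `|e^{s ψ} - 1| ≤ s |ψ|`, and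
`|ψ| |ĥ| ≤ C (1 + |ξ|²) |ĥ|` is integrable, so dominated convergence lets `s → 0⁺` pass under
the integral, where `(e^{s ψ} - 1) / s → ψ`.
-/

open MeasureTheory
open scoped RealInnerProductSpace

/-- The Fourier transform `ĥ(ξ) = (2π)^{-d/2} ∫ e^{-i⟨ξ,y⟩} h(y) dy`. -/
noncomputable def fourierT {d : ℕ} (h : EuclideanSpace ℝ (Fin d) → ℂ)
    (ξ : EuclideanSpace ℝ (Fin d)) : ℂ :=
  (((2 * Real.pi) ^ (-(d : ℝ) / 2) : ℝ) : ℂ) *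
    ∫ y, Complex.exp (-Complex.I * (⟪ξ, y⟫ : ℂ)) * h y

open Complex Filter Topology FourierTransform
open scoped Real SchwartzMap

theorem Complex.norm_exp_sub_one_le_norm {z : ℂ} (hz : z.re ≤ 0) : ‖exp z - 1‖ ≤ ‖z‖ := by
  have hexp : ∀ w ∈ {w : ℂ | w.re ≤ 0}, ‖deriv exp w‖ ≤ 1 := fun w hw => by
    simpa [norm_exp] using hw
  simpa using (convex_halfSpace_re_le 0).norm_image_sub_le_of_norm_deriv_le
    (fun w _ => differentiableAt_exp) hexp (by simp : (0 : ℂ) ∈ {w : ℂ | w.re ≤ 0}) hz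

theorem Complex.tendsto_exp_mul_sub_one_div (z : ℂ) :
    Tendsto (fun s : ℝ => (1 / (s : ℂ)) * (exp (s * z) - 1)) (𝓝[≠] 0) (𝓝 z) := by
  have hderiv : HasDerivAt (fun s : ℝ => exp (s * z)) z 0 := by
    simpa using ((hasDerivAt_id (0 : ℝ)).ofReal_comp.mul_const z).cexp
  refine (hasDerivAt_iff_tendsto_slope.mp hderiv).congr fun s => ?_
  simp [slope, div_eq_inv_mul]

theorem tendsto_integral_exp_mul_sub_one_div {α : Type*} [MeasurableSpace α] {μ : Measure α}
    {ψ g : α → ℂ} (hψ : AEStronglyMeasurable ψ μ) (hg : AEStronglyMeasurable g μ)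
    (hre : ∀ᵐ a ∂μ, (ψ a).re ≤ 0) (hgψ : Integrable (fun a => g a * ψ a) μ) :
    Tendsto (fun s : ℝ => (1 / (s : ℂ)) * ∫ a, g a * (exp (s * ψ a) - 1) ∂μ) (𝓝[>] 0)
      (𝓝 (∫ a, g a * ψ a ∂μ)) := by
  simp_rw [← integral_const_mul]
  refine tendsto_integral_filter_of_dominated_convergence (fun a => ‖g a * ψ a‖) ?_ ?_ hgψ.norm ?_
  · exact Eventually.of_forall fun s => (hg.mul ((continuous_exp.comp_aestronglyMeasurable
      (hψ.const_mul _)).sub aestronglyMeasurable_const)).const_mul _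
  · filter_upwards [self_mem_nhdsWithin] with s (hs : 0 < s)
    filter_upwards [hre] with a ha
    have hsψ : ((s : ℂ) * ψ a).re ≤ 0 := by
      simpa using mul_nonpos_of_nonneg_of_nonpos hs.le ha
    calc ‖1 / (s : ℂ) * (g a * (exp (s * ψ a) - 1))‖
        = ‖g a‖ * (‖exp (s * ψ a) - 1‖ / s) := by
          simp [abs_of_pos hs, div_eq_inv_mul, mul_left_comm]
      _ ≤ ‖g a‖ * (‖(s : ℂ) * ψ a‖ / s) := by
          gcongr; exact norm_exp_sub_one_le_norm hsψ
      _ = ‖g a * ψ a‖ := by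
          rw [norm_mul, norm_mul, norm_real, Real.norm_of_nonneg hs.le]; field_simp
  · refine Eventually.of_forall fun a => ?_
    have := ((tendsto_exp_mul_sub_one_div (ψ a)).mono_left (nhdsGT_le_nhdsNE 0)).const_mul (g a)
    simpa only [mul_left_comm (g a)] using this

theorem SchwartzMap.integrable_mul_of_norm_le {D : Type*} [NormedAddCommGroup D]
    [NormedSpace ℝ D] [MeasurableSpace D] [BorelSpace D] [SecondCountableTopology D]
    {μ : Measure D} [μ.HasTemperateGrowth] (g : 𝓢(D, ℂ)) {ψ : D → ℂ}
    (hψ : AEStronglyMeasurable ψ μ) {C : ℝ} {k : ℕ} (hbound : ∀ x, ‖ψ x‖ ≤ C * (1 + ‖x‖ ^ k)) :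
    Integrable (fun x => ψ x * g x) μ := by
  refine ((g.integrable.norm.add (g.integrable_pow_mul μ k)).const_mul C).mono'
    (hψ.mul g.continuous.aestronglyMeasurable) (Eventually.of_forall fun x => ?_)
  calc ‖ψ x * g x‖ = ‖ψ x‖ * ‖g x‖ := norm_mul _ _
    _ ≤ C * (1 + ‖x‖ ^ k) * ‖g x‖ := by gcongr; exact hbound x
    _ = C * (‖g x‖ + ‖x‖ ^ k * ‖g x‖) := by ring

theorem integral_integral_exp_inner_add_mul {E : Type*} [NormedAddCommGroup E]
    [InnerProductSpace ℝ E] [MeasurableSpace E] [BorelSpace E] [SecondCountableTopology E]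
    {μ ν : Measure E} [IsFiniteMeasure μ] [SFinite ν] {g : E → ℂ} (hg : Integrable g ν) (x : E) :
    ∫ y, ∫ ξ, exp (I * ⟪ξ, x + y⟫) * g ξ ∂ν ∂μ =
      ∫ ξ, exp (I * ⟪ξ, x⟫) * charFun μ ξ * g ξ ∂ν := by
  have hint : Integrable (Function.uncurry fun y ξ => exp (I * ⟪ξ, x + y⟫) * g ξ) (μ.prod ν) := by
    refine (hg.norm.comp_snd μ).mono' ?_ (Eventually.of_forall fun p => ?_)
    · exact (Continuous.aestronglyMeasurable (by fun_prop)).mul hg.aestronglyMeasurable.comp_snd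
    · simp [Function.uncurry, norm_exp]
  rw [integral_integral_swap hint]
  refine integral_congr_ae (Eventually.of_forall fun ξ => ?_)
  simp only [inner_add_right, ofReal_add, mul_add, exp_add, charFun_apply, real_inner_comm ξ,
    ← integral_const_mul, ← integral_mul_const]
  congr 1 with y
  ring_nf

section Fourier

variable {d : ℕ}

theorem fourierT_eq_fourier (h : EuclideanSpace ℝ (Fin d) → ℂ) (ξ : EuclideanSpace ℝ (Fin d)) :
    fourierT h ξ = (((2 * π) ^ (-(d : ℝ) / 2) : ℝ) : ℂ) * 𝓕 h ((2 * π)⁻¹ • ξ) := by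
  rw [fourierT, Real.fourier_eq']
  congr 1
  refine integral_congr_ae (Eventually.of_forall fun y => ?_)
  have : -2 * π * ⟪y, (2 * π)⁻¹ • ξ⟫ = -⟪ξ, y⟫ := by
    rw [real_inner_smul_right, real_inner_comm]; field_simp
  simp only [this, smul_eq_mul]
  push_cast
  ring_nf

theorem rpow_neg_half_mul_rpow_neg_half_mul_pow_eq_one {x : ℝ} (hx : 0 < x) (n : ℕ) :
    x ^ (-(n : ℝ) / 2) * x ^ (-(n : ℝ) / 2) * x ^ n = 1 := by
  rw [← Real.rpow_add hx, ← Real.rpow_natCast, ← Real.rpow_add hx]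
  norm_num

noncomputable def SchwartzMap.fourierT (h : 𝓢(EuclideanSpace ℝ (Fin d), ℂ)) :
    𝓢(EuclideanSpace ℝ (Fin d), ℂ) :=
  (((2 * π) ^ (-(d : ℝ) / 2) : ℝ) : ℂ) •
    compCLMOfContinuousLinearEquiv ℂ
      (ContinuousLinearEquiv.smulLeft (Units.mk0 (2 * π)⁻¹ (by positivity))) (𝓕 h)

theorem SchwartzMap.coe_fourierT (h : 𝓢(EuclideanSpace ℝ (Fin d), ℂ)) :
    ⇑h.fourierT = _root_.fourierT h := by
  ext ξ
  simp only [SchwartzMap.fourierT, smul_apply, compCLMOfContinuousLinearEquiv_apply,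
    Function.comp_apply, ContinuousLinearEquiv.smulLeft_apply_apply, Units.smul_def,
    Units.val_mk0, SchwartzMap.fourier_coe, fourierT_eq_fourier, smul_eq_mul]

theorem fourierT_inversion (h : 𝓢(EuclideanSpace ℝ (Fin d), ℂ)) (x : EuclideanSpace ℝ (Fin d)) :
    (((2 * π) ^ (-(d : ℝ) / 2) : ℝ) : ℂ) *
      ∫ ξ, exp (I * ⟪ξ, x⟫) * fourierT h ξ = h x := by
  -- the substitution `ξ = 2π η` brings the integral to Mathlib's normalization of `𝓕⁻`
  set G : EuclideanSpace ℝ (Fin d) → ℂ := fun η => exp (I * ⟪(2 * π) • η, x⟫) * 𝓕 (⇑h) η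
  have h2π : (0 : ℝ) < 2 * π := by positivity
  have hG : ∀ ξ, exp (I * ⟪ξ, x⟫) * 𝓕 (⇑h) ((2 * π)⁻¹ • ξ) = G ((2 * π)⁻¹ • ξ) := fun ξ => by
    simp only [G, smul_smul, mul_inv_cancel₀ h2π.ne', one_smul]
  have hGint : ∫ η, G η = 𝓕⁻ (𝓕 ⇑h) x := by
    rw [Real.fourierInv_eq']
    refine integral_congr_ae (Eventually.of_forall fun η => ?_)
    simp only [G, real_inner_smul_left, smul_eq_mul, mul_comm I]
  have hinv : 𝓕⁻ (𝓕 ⇑h) x = h x := by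
    rw [← SchwartzMap.fourier_coe, ← SchwartzMap.fourierInv_coe, fourierInv_fourier_eq]
  simp_rw [fourierT_eq_fourier, mul_left_comm (exp _), integral_const_mul, hG,
    Measure.integral_comp_inv_smul_of_nonneg _ _ h2π.le, hGint, hinv, finrank_euclideanSpace_fin,
    Complex.real_smul, ← mul_assoc]
  rw [← ofReal_mul, ← ofReal_mul, rpow_neg_half_mul_rpow_neg_half_mul_pow_eq_one h2π, ofReal_one,
    one_mul]

theorem integral_comp_add_sub_eq_integral_charFun_sub_one (μ : Measure (EuclideanSpace ℝ (Fin d)))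
    [IsProbabilityMeasure μ] (h : 𝓢(EuclideanSpace ℝ (Fin d), ℂ)) (x : EuclideanSpace ℝ (Fin d)) :
    ∫ y, h (x + y) ∂μ - h x = (((2 * π) ^ (-(d : ℝ) / 2) : ℝ) : ℂ) *
      ∫ ξ, exp (I * ⟪ξ, x⟫) * (charFun μ ξ - 1) * fourierT h ξ := by
  have hĥ : Integrable (fourierT h) := h.coe_fourierT ▸ h.fourierT.integrable
  have hexp : AEStronglyMeasurable (fun ξ : EuclideanSpace ℝ (Fin d) => exp (I * ⟪ξ, x⟫)) :=
    Continuous.aestronglyMeasurable (by fun_prop)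
  have hint₁ : Integrable (fun ξ => exp (I * ⟪ξ, x⟫) * charFun μ ξ * fourierT h ξ) :=
    hĥ.bdd_mul (hexp.mul measurable_charFun.aestronglyMeasurable)
      (Eventually.of_forall fun ξ => by simpa [norm_exp] using norm_charFun_le_one ξ)
  have hint₀ : Integrable (fun ξ => exp (I * ⟪ξ, x⟫) * fourierT h ξ) :=
    hĥ.bdd_mul hexp (Eventually.of_forall fun ξ => (by simp [norm_exp] : _ ≤ (1 : ℝ)))
  simp_rw [← fourierT_inversion h (x + _), integral_const_mul,
    integral_integral_exp_inner_add_mul hĥ, ← fourierT_inversion h x, ← mul_sub,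
    ← integral_sub hint₁ hint₀, mul_sub_one, sub_mul]

theorem tendsto_div_integral_exp_mul_sub_one_mul_fourierT {ψ : EuclideanSpace ℝ (Fin d) → ℂ}
    (hψ : AEStronglyMeasurable ψ) (hre : ∀ ξ, (ψ ξ).re ≤ 0) {C : ℝ} {k : ℕ}
    (hbound : ∀ ξ, ‖ψ ξ‖ ≤ C * (1 + ‖ξ‖ ^ k)) (h : 𝓢(EuclideanSpace ℝ (Fin d), ℂ))
    (x : EuclideanSpace ℝ (Fin d)) :
    Tendsto (fun s : ℝ => (1 / (s : ℂ)) * ((((2 * π) ^ (-(d : ℝ) / 2) : ℝ) : ℂ) *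
      ∫ ξ, exp (I * ⟪ξ, x⟫) * (exp (s * ψ ξ) - 1) * fourierT h ξ)) (𝓝[>] 0)
      (𝓝 ((((2 * π) ^ (-(d : ℝ) / 2) : ℝ) : ℂ) *
        ∫ ξ, exp (I * ⟪ξ, x⟫) * ψ ξ * fourierT h ξ)) := by
  have hexp : AEStronglyMeasurable (fun ξ : EuclideanSpace ℝ (Fin d) => exp (I * ⟪ξ, x⟫)) :=
    Continuous.aestronglyMeasurable (by fun_prop)
  have hint : Integrable (fun ξ => exp (I * ⟪ξ, x⟫) * fourierT h ξ * ψ ξ) := by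
    have := h.fourierT.integrable_mul_of_norm_le (μ := volume)
      (ψ := fun ξ => exp (I * ⟪ξ, x⟫) * ψ ξ) (hexp.mul hψ)
      (fun ξ => by simpa [norm_exp] using hbound ξ)
    simpa only [h.coe_fourierT, mul_right_comm] using this
  simp_rw [mul_right_comm _ _ (fourierT _ _), mul_left_comm (1 / _ : ℂ)]
  exact (tendsto_integral_exp_mul_sub_one_div hψ
    (hexp.mul (h.coe_fourierT ▸ h.fourierT.continuous.aestronglyMeasurable))
    (Eventually.of_forall hre) hint).const_mul _

end Fourier

theorem stmt_7_general {d : ℕ}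
    (ψ : EuclideanSpace ℝ (Fin d) → ℂ) (hψmeas : Measurable ψ)
    (hre : ∀ ξ, (ψ ξ).re ≤ 0)
    (C : ℝ)
    (hbound : ∀ ξ, ‖ψ ξ‖ ≤ C * (1 + ‖ξ‖ ^ 2))
    (h : SchwartzMap (EuclideanSpace ℝ (Fin d)) ℂ)
    (x : EuclideanSpace ℝ (Fin d)) :
    Filter.Tendsto
      (fun s : ℝ => (1 / (s : ℂ)) *
        ((((2 * Real.pi) ^ (-(d : ℝ) / 2) : ℝ) : ℂ) *
          ∫ ξ, Complex.exp (Complex.I * (⟪ξ, x⟫ : ℂ)) *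
            (Complex.exp ((s : ℂ) * ψ ξ) - 1) * fourierT (fun y => h y) ξ))
      (nhdsWithin 0 (Set.Ioi 0))
      (nhds ((((2 * Real.pi) ^ (-(d : ℝ) / 2) : ℝ) : ℂ) *
        ∫ ξ, Complex.exp (Complex.I * (⟪ξ, x⟫ : ℂ)) * ψ ξ * fourierT (fun y => h y) ξ)) ∧
    ∀ μ : ℝ → Measure (EuclideanSpace ℝ (Fin d)),
      (∀ s : ℝ, 0 < s → IsProbabilityMeasure (μ s)) →
      (∀ s : ℝ, 0 < s → ∀ ξ : EuclideanSpace ℝ (Fin d),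
        ∫ y, Complex.exp (Complex.I * (⟪ξ, y⟫ : ℂ)) ∂(μ s) =
          Complex.exp ((s : ℂ) * ψ ξ)) →
      Filter.Tendsto
        (fun s : ℝ => ((∫ y, h (x + y) ∂(μ s)) - h x) / (s : ℂ))
        (nhdsWithin 0 (Set.Ioi 0))
        (nhds ((((2 * Real.pi) ^ (-(d : ℝ) / 2) : ℝ) : ℂ) *
          ∫ ξ, Complex.exp (Complex.I * (⟪ξ, x⟫ : ℂ)) * ψ ξ * fourierT (fun y => h y) ξ)) := by
  have hlimit := tendsto_div_integral_exp_mul_sub_one_mul_fourierT hψmeas.aestronglyMeasurable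
    hre hbound h x
  refine ⟨hlimit, fun μ hprob hchar => hlimit.congr' ?_⟩
  filter_upwards [self_mem_nhdsWithin] with s (hs : 0 < s)
  have : IsProbabilityMeasure (μ s) := hprob s hs
  have hφ : charFun (μ s) = fun ξ => exp (s * ψ ξ) := funext fun ξ => by
    simp only [charFun_apply, ← hchar s hs ξ, real_inner_comm ξ, mul_comm I]
  rw [integral_comp_add_sub_eq_integral_charFun_sub_one, hφ, one_div_mul_eq_div]

/-- Theorem 2.16, part 2: the generator of the Feller semigroup of a (multiparameter)
Lévy process is a pseudo-differential operator with symbol given by the Lévy exponent. -/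
theorem stmt_7 {d : ℕ}
    (ψ : EuclideanSpace ℝ (Fin d) → ℂ) (hψmeas : Measurable ψ)
    (hre : ∀ ξ, (ψ ξ).re ≤ 0)
    (C : ℝ) (hC : 0 < C)
    (hbound : ∀ ξ, ‖ψ ξ‖ ≤ C * (1 + ‖ξ‖ ^ 2))
    (h : SchwartzMap (EuclideanSpace ℝ (Fin d)) ℂ)
    (x : EuclideanSpace ℝ (Fin d)) :
    Filter.Tendsto
      (fun s : ℝ => (1 / (s : ℂ)) *
        ((((2 * Real.pi) ^ (-(d : ℝ) / 2) : ℝ) : ℂ) *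
          ∫ ξ, Complex.exp (Complex.I * (⟪ξ, x⟫ : ℂ)) *
            (Complex.exp ((s : ℂ) * ψ ξ) - 1) * fourierT (fun y => h y) ξ))
      (nhdsWithin 0 (Set.Ioi 0))
      (nhds ((((2 * Real.pi) ^ (-(d : ℝ) / 2) : ℝ) : ℂ) *
        ∫ ξ, Complex.exp (Complex.I * (⟪ξ, x⟫ : ℂ)) * ψ ξ * fourierT (fun y => h y) ξ)) ∧
    ∀ μ : ℝ → Measure (EuclideanSpace ℝ (Fin d)),
      (∀ s : ℝ, 0 < s → IsProbabilityMeasure (μ s)) →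
      (∀ s : ℝ, 0 < s → ∀ ξ : EuclideanSpace ℝ (Fin d),
        ∫ y, Complex.exp (Complex.I * (⟪ξ, y⟫ : ℂ)) ∂(μ s) =
          Complex.exp ((s : ℂ) * ψ ξ)) →
      Filter.Tendsto
        (fun s : ℝ => ((∫ y, h (x + y) ∂(μ s)) - h x) / (s : ℂ))
        (nhdsWithin 0 (Set.Ioi 0))
        (nhds ((((2 * Real.pi) ^ (-(d : ℝ) / 2) : ℝ) : ℂ) *
          ∫ ξ, Complex.exp (Complex.I * (⟪ξ, x⟫ : ℂ)) * ψ ξ * fourierT (fun y => h y) ξ)) :=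
  stmt_7_general ψ hψmeas hre C hbound h x
end
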